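/- Let D be a real graded division algebra admitting a degree-preserving involution φ_0 restricting to conjugation on D_e, and suppose it is not the case that ℂ ≅ D_e ⊆ Z(D). Then every automorphism of D as a graded algebra commutes with φ_0. -/

import Mathlib

/-!
Both `ψ ∘ φ₀` and `φ₀ ∘ ψ` are anti-automorphisms, so they agree on a subalgebra, and since
every component `D_t` equals `D_e X_t` it suffices to check `D_e` and the `X_t`. On `D_e` we
have `φ₀ z = tr z - z`, and `ψ` preserves traces. Write `ψ X_t = d X_t` with `d ∈ D_e`; the
claim for `X_t` becomes `d X_t = X_t φ₀(d)`, which is clear when `d` is real. If `D_e ≅ ℝ`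
it is. If `D_e ≅ ℍ`, then `X_t` centralizes `D_e`, hence so does `d` (as `ψ(D_e) = D_e`), so
`d` is real. If `D_e = ℝ ⊕ ℝ j ≅ ℂ`, each `X_u` commutes or anticommutes with `j`, and since
`D_e` is not central some `X_u` anticommutes with it. For an anticommuting `X_t` the claim is
automatic. For a commuting one, the commutator `c` in `X_t X_u = c X_u X_t` lies in `D_e` and
satisfies `c² = 1` (apply `φ₀`), so `ψ c = c`. Applying `ψ` to the relation then gives
`φ₀ d = d`.
-/

variable {G : Type*} [CommGroup G] [DecidableEq G] {D : Type*} [Ring D] [Algebra ℝ D]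

/-- A real graded division algebra. -/
def IsGDA (comp : G → Submodule ℝ D) : Prop :=
  DirectSum.IsInternal comp ∧ (1 : D) ∈ comp 1 ∧
    (∀ (g h : G) (a b : D), a ∈ comp g → b ∈ comp h → a * b ∈ comp (g * h)) ∧
    ∀ (g : G) (a : D), a ∈ comp g → a ≠ 0 → IsUnit a

theorem sub_algebraMap_mul_self {z : D} {r s : ℝ} (hz : z * z = r • z - algebraMap ℝ D s) :
    (z - algebraMap ℝ D (r / 2)) * (z - algebraMap ℝ D (r / 2)) =
      algebraMap ℝ D (r ^ 2 / 4 - s) := by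
  simp only [Algebra.algebraMap_eq_smul_one, sub_mul, mul_sub, smul_mul_assoc, mul_smul_comm,
    one_mul, mul_one, hz]
  module

theorem notMem_range_of_mul_self_eq_neg_one [Nontrivial D] {j : D} (hj : j * j = -1) :
    j ∉ Set.range (algebraMap ℝ D) := by
  rintro ⟨a, rfl⟩
  have h0 : a * a + 1 = 0 := (algebraMap ℝ D).injective (by simp [hj])
  nlinarith [mul_self_nonneg a]

theorem eq_algebraMap_sub_and_mul_self_eq {z w : D} {r s : ℝ}
    (hr : z + w = algebraMap ℝ D r) (hs : z * w = algebraMap ℝ D s) :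
    w = algebraMap ℝ D r - z ∧ z * z = r • z - algebraMap ℝ D s := by
  have hw : w = algebraMap ℝ D r - z := eq_sub_of_add_eq' hr
  refine ⟨hw, ?_⟩
  rw [← hs, hw, mul_sub, ← Algebra.commutes, Algebra.smul_def, sub_sub_cancel]

theorem map_one_of_anti_involutive {M : Type*} [MulOneClass M] {f : M → M}
    (hanti : ∀ x y, f (x * y) = f y * f x) (hinvol : ∀ x, f (f x) = x) : f 1 = 1 :=
  calc f 1 = f 1 * f (f 1) := by rw [hinvol, mul_one]
    _ = f (f 1 * 1) := (hanti _ _).symm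
    _ = 1 := by rw [mul_one, hinvol]

theorem LinearMap.map_algebraMap_of_map_one {f : D →ₗ[ℝ] D} (hf : f 1 = 1) (r : ℝ) :
    f (algebraMap ℝ D r) = algebraMap ℝ D r := by
  rw [Algebra.algebraMap_eq_smul_one, map_smul, hf]

def commutingSubalgebra (φ : D →ₗ[ℝ] D) (hanti : ∀ x y, φ (x * y) = φ y * φ x)
    (hφ1 : φ 1 = 1) (ψ : D →ₐ[ℝ] D) : Subalgebra ℝ D where
  carrier := {x | ψ (φ x) = φ (ψ x)}
  mul_mem' {x y} hx hy := by
    simp only [Set.mem_ofPred_eq] at hx hy ⊢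
    rw [hanti, map_mul, map_mul, hanti, hx, hy]
  add_mem' {x y} hx hy := by
    simp only [Set.mem_ofPred_eq] at hx hy ⊢
    rw [map_add, map_add, map_add, map_add, hx, hy]
  algebraMap_mem' r := by
    simp only [Set.mem_ofPred_eq]
    rw [LinearMap.map_algebraMap_of_map_one hφ1, AlgHom.commutes,
      LinearMap.map_algebraMap_of_map_one hφ1]

theorem mem_commutingSubalgebra {φ : D →ₗ[ℝ] D} {hanti : ∀ x y, φ (x * y) = φ y * φ x}
    {hφ1 : φ 1 = 1} {ψ : D →ₐ[ℝ] D} {x : D} :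
    x ∈ commutingSubalgebra φ hanti hφ1 ψ ↔ ψ (φ x) = φ (ψ x) :=
  Iff.rfl

theorem comm_of_eq_algebraMap_sub {φ : D →ₗ[ℝ] D} (hφ1 : φ 1 = 1) {ψ : D →ₐ[ℝ] D}
    (hψ : Function.Injective ψ) {E : Set D} (hψE : ∀ z ∈ E, ψ z ∈ E)
    (hφE : ∀ z ∈ E, ∃ r s : ℝ,
      φ z = algebraMap ℝ D r - z ∧ z * z = r • z - algebraMap ℝ D s)
    {z : D} (hz : z ∈ E) : ψ (φ z) = φ (ψ z) := by
  obtain ⟨r, s, hφz, hq⟩ := hφE z hz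
  obtain ⟨r', s', hφz', hq'⟩ := hφE (ψ z) (hψE z hz)
  by_cases hr : r = r'
  · rw [hφz, hφz', map_sub, AlgHom.commutes, hr]
  -- otherwise `ψ z` satisfies two different monic quadratics, so it is real
  have hψq : (r - r') • ψ z = algebraMap ℝ D (s - s') := by
    have := (congrArg ψ hq).symm
    rw [map_mul, hq', map_sub, map_smul, AlgHom.commutes, sub_eq_sub_iff_sub_eq_sub] at this
    rwa [sub_smul, map_sub]
  have hzr : z = algebraMap ℝ D ((r - r')⁻¹ * (s - s')) := by
    apply hψ
    rw [AlgHom.commutes, map_mul, ← hψq, ← Algebra.smul_def, inv_smul_smul₀ (sub_ne_zero.2 hr)]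
  rw [hzr, LinearMap.map_algebraMap_of_map_one hφ1, AlgHom.commutes,
    LinearMap.map_algebraMap_of_map_one hφ1]

theorem comm_of_mul_eq_mul_map {φ : D →ₗ[ℝ] D} (hanti : ∀ x y, φ (x * y) = φ y * φ x)
    {ψ : D →ₐ[ℝ] D} {y d : D} {η : ℝ} (hφy : φ y = η • y) (hψy : ψ y = d * y)
    (hd : d * y = y * φ d) : ψ (φ y) = φ (ψ y) := by
  rw [hφy, map_smul, hψy, hanti, hφy, hd, smul_mul_assoc]

theorem commute_of_map_eq_mul {E : Submodule ℝ D} [FiniteDimensional ℝ E] (ψ : D ≃ₐ[ℝ] D)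
    (hψE : ∀ z ∈ E, ψ z ∈ E) (y : Dˣ) (hyE : ∀ w ∈ E, Commute (y : D) w) {d : D}
    (hdy : ψ y = d * y) : ∀ w ∈ E, Commute d w := by
  have hle : E.map (ψ.toLinearEquiv : D →ₗ[ℝ] D) ≤ E := by
    rintro _ ⟨z, hz, rfl⟩
    exact hψE z hz
  have hmap := Submodule.eq_of_le_of_finrank_eq hle (LinearEquiv.finrank_map_eq _ _)
  intro w hw
  rw [← hmap] at hw
  obtain ⟨z, hz, rfl⟩ := hw
  have hz' := hψE z hz
  have hψ : ψ y * ψ z = ψ z * ψ y := by rw [← map_mul, ← map_mul, (hyE z hz).eq]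
  rw [hdy] at hψ
  apply y.mul_left_inj.1
  change d * ψ z * y = ψ z * d * y
  rw [mul_assoc, ← (hyE _ hz').eq, ← mul_assoc, hψ, mul_assoc]

theorem mul_self_eq_one_of_mul_eq_mul_mul {φ : D →ₗ[ℝ] D}
    (hanti : ∀ x y, φ (x * y) = φ y * φ x) {x y c : D} (hxy : IsUnit (x * y)) {η η' : ℝ}
    (hη : η * η' ≠ 0) (hφx : φ x = η' • x) (hφy : φ y = η • y) (hxc : x * φ c = c * x)
    (hyc : y * φ c = φ c * y) (hrel : y * x = c * (x * y)) : c * c = 1 := by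
  have hφrel := congrArg φ hrel
  rw [hanti, hanti, hanti, hφx, hφy, smul_mul_smul_comm, smul_mul_smul_comm, smul_mul_assoc,
    mul_comm η'] at hφrel
  have hxy' : x * y = y * x * φ c := smul_right_injective D hη hφrel
  refine hxy.mul_right_cancel ?_
  calc c * c * (x * y) = c * (x * φ c) * y := by rw [hxc]; simp only [mul_assoc]
    _ = c * (x * y) * φ c := by rw [mul_assoc c, mul_assoc x, ← hyc]; simp only [mul_assoc]
    _ = 1 * (x * y) := by rw [← hrel, ← hxy', one_mul]

theorem mul_eq_mul_map_of_mem_range {φ : D →ₗ[ℝ] D} (hφ1 : φ 1 = 1) {d : D}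
    (hd : d ∈ Set.range (algebraMap ℝ D)) (y : D) : d * y = y * φ d := by
  obtain ⟨a, rfl⟩ := hd
  rw [LinearMap.map_algebraMap_of_map_one hφ1, Algebra.commutes]

theorem finrank_eq_two_of_forall_eq {E : Submodule ℝ D} {j : D} (h1 : 1 ∈ E) (hj : j ∈ E)
    (hspan : ∀ z ∈ E, ∃ a b : ℝ, z = algebraMap ℝ D a + b • j)
    (hnr : j ∉ Set.range (algebraMap ℝ D)) : Module.finrank ℝ E = 2 := by
  have hE : E = Submodule.span ℝ (Set.range ![1, j]) := by
    refine le_antisymm (fun z hz => ?_) (Submodule.span_le.2 ?_)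
    · obtain ⟨a, b, rfl⟩ := hspan z hz
      rw [Algebra.algebraMap_eq_smul_one]
      exact add_mem (Submodule.smul_mem _ _ (Submodule.subset_span ⟨0, rfl⟩))
        (Submodule.smul_mem _ _ (Submodule.subset_span ⟨1, rfl⟩))
    · rintro _ ⟨i, rfl⟩
      fin_cases i
      exacts [h1, hj]
  have : Nontrivial D := nontrivial_of_ne j 0 fun h => hnr ⟨0, by rw [h, map_zero]⟩
  have hli : LinearIndependent ℝ ![(1 : D), j] := by
    rw [LinearIndependent.pair_iff]
    intro a b hab
    obtain rfl | hb := eq_or_ne b 0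
    · rw [zero_smul, add_zero, smul_eq_zero] at hab
      exact ⟨hab.resolve_right one_ne_zero, rfl⟩
    · refine (hnr ⟨-(b⁻¹ * a), ?_⟩).elim
      rw [← inv_smul_smul₀ hb j, eq_neg_of_add_eq_zero_right hab, smul_neg, smul_smul,
        Algebra.algebraMap_eq_smul_one, neg_smul]
  rw [hE, finrank_span_eq_card hli, Fintype.card_fin]

namespace IsGDA

variable {comp : G → Submodule ℝ D}

theorem one_mem (h : IsGDA comp) : (1 : D) ∈ comp 1 := h.2.1

theorem mul_mem (h : IsGDA comp) {g g' : G} {a b : D} (ha : a ∈ comp g) (hb : b ∈ comp g') :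
    a * b ∈ comp (g * g') :=
  h.2.2.1 g g' a b ha hb

theorem isUnit_of_mem (h : IsGDA comp) {g : G} {a : D} (ha : a ∈ comp g) (h0 : a ≠ 0) :
    IsUnit a :=
  h.2.2.2 g a ha h0

theorem algebraMap_mem (h : IsGDA comp) (r : ℝ) : algebraMap ℝ D r ∈ comp 1 := by
  rw [Algebra.algebraMap_eq_smul_one]
  exact (comp 1).smul_mem r h.one_mem

theorem coe_decompose_mul_of_left_mem (h : IsGDA comp) [DirectSum.Decomposition comp]
    {g : G} {a : D} (ha : a ∈ comp g) (x : D) (k : G) :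
    (DirectSum.decompose comp (a * x) (g * k) : D) = a * DirectSum.decompose comp x k := by
  induction x using DirectSum.Decomposition.inductionOn comp with
  | zero => simp
  | @homogeneous i m =>
    have ham : a * m ∈ comp (g * i) := h.mul_mem ha m.2
    by_cases hik : i = k
    · subst hik
      rw [DirectSum.decompose_of_mem_same comp ham, DirectSum.decompose_of_mem_same comp m.2]
    · rw [DirectSum.decompose_of_mem_ne comp ham (by simpa using hik),
        DirectSum.decompose_of_mem_ne comp m.2 hik, mul_zero]
  | add m m' hm hm' => simp [mul_add, hm, hm']

theorem inv_mem (h : IsGDA comp) {g : G} (u : Dˣ) (hu : (u : D) ∈ comp g) :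
    ((u⁻¹ : Dˣ) : D) ∈ comp g⁻¹ := by
  let _ : DirectSum.Decomposition comp := h.1.chooseDecomposition
  -- the degree-`1` part of `u * u⁻¹ = 1` is `u` times the degree-`g⁻¹` part of `u⁻¹`
  have key := h.coe_decompose_mul_of_left_mem hu (↑u⁻¹ : D) g⁻¹
  rw [Units.mul_inv, mul_inv_cancel, DirectSum.decompose_of_mem_same comp h.one_mem,
    ← Units.mul_inv u] at key
  rw [u.mul_right_inj.1 key]
  exact Submodule.coe_mem _

theorem mul_inv_mem (h : IsGDA comp) {g : G} {a : D} (u : Dˣ) (ha : a ∈ comp g)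
    (hu : (u : D) ∈ comp g) : a * ((u⁻¹ : Dˣ) : D) ∈ comp 1 := by
  simpa using h.mul_mem ha (h.inv_mem u hu)

theorem subalgebra_eq_top (h : IsGDA comp) {T : Subgroup G} (hT : ∀ g, comp g ≠ ⊥ → g ∈ T)
    (X : T → Dˣ) (hX : ∀ t : T, (X t : D) ∈ comp t) {S : Subalgebra ℝ D}
    (hS₁ : comp 1 ≤ Subalgebra.toSubmodule S) (hSX : ∀ t : T, (X t : D) ∈ S) : S = ⊤ := by
  rw [← Algebra.toSubmodule_eq_top, eq_top_iff, ← h.1.submodule_iSup_eq_top, iSup_le_iff]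
  intro g y hy
  by_cases hg : comp g = ⊥
  · rw [hg, Submodule.mem_bot] at hy
    simp [hy]
  · have hyX : y = y * ((X ⟨g, hT g hg⟩)⁻¹ : Dˣ) * X ⟨g, hT g hg⟩ := by simp [mul_assoc]
    rw [hyX]
    exact S.mul_mem (hS₁ (h.mul_inv_mem _ hy (hX ⟨g, hT g hg⟩))) (hSX _)

theorem eq_or_eq_neg_of_mul_self_eq (h : IsGDA comp) {u v : D} (hu : u ∈ comp 1)
    (hv : v ∈ comp 1) (huv : Commute u v) (h2 : u * u = v * v) : u = v ∨ u = -v := by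
  by_cases huv' : u - v = 0
  · exact Or.inl (sub_eq_zero.1 huv')
  · have : (u - v) * (u + v) = 0 := by rw [← huv.mul_self_sub_mul_self_eq', h2, sub_self]
    exact Or.inr (eq_neg_of_add_eq_zero_left
      ((h.isUnit_of_mem (sub_mem hu hv) huv').mul_right_eq_zero.1 this))

theorem mem_range_of_mul_self_eq (h : IsGDA comp) {u : D} (hu : u ∈ comp 1) {c : ℝ}
    (hc : 0 ≤ c) (h2 : u * u = algebraMap ℝ D c) : u ∈ Set.range (algebraMap ℝ D) := by
  have hsq : u * u = algebraMap ℝ D √c * algebraMap ℝ D √c := by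
    rw [← map_mul, Real.mul_self_sqrt hc, h2]
  rcases h.eq_or_eq_neg_of_mul_self_eq hu (h.algebraMap_mem _)
    (Algebra.commute_algebraMap_right _ _) hsq with hu' | hu'
  · exact ⟨√c, hu'.symm⟩
  · exact ⟨-√c, by rw [map_neg, hu']⟩

theorem exists_mul_self_eq_neg_one (h : IsGDA comp) {z : D} (hz : z ∈ comp 1) {r s : ℝ}
    (hq : z * z = r • z - algebraMap ℝ D s) (hnr : z ∉ Set.range (algebraMap ℝ D)) :
    ∃ j ∈ comp 1, j * j = -1 ∧ ∃ a b : ℝ, j = a • z + algebraMap ℝ D b := by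
  set u := z - algebraMap ℝ D (r / 2)
  have hu : u ∈ comp 1 := sub_mem hz (h.algebraMap_mem _)
  have hc : r ^ 2 / 4 - s < 0 := by
    by_contra! hc
    obtain ⟨a, ha⟩ := h.mem_range_of_mul_self_eq hu hc (sub_algebraMap_mul_self hq)
    exact hnr ⟨a + r / 2, by rw [map_add, ha, sub_add_cancel]⟩
  set μ := √(s - r ^ 2 / 4)
  have hμ : μ ≠ 0 := (Real.sqrt_pos.2 (by linarith)).ne'
  refine ⟨μ⁻¹ • u, (comp 1).smul_mem _ hu, ?_, μ⁻¹, -(μ⁻¹ * (r / 2)), ?_⟩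
  · have hμ2 : μ⁻¹ * μ⁻¹ * (r ^ 2 / 4 - s) = -1 := by
      field_simp
      rw [Real.sq_sqrt (by linarith)]
      ring
    rw [smul_mul_smul_comm, sub_algebraMap_mul_self hq, Algebra.smul_def, ← map_mul, hμ2,
      map_neg, map_one]
  · simp only [u, Algebra.algebraMap_eq_smul_one]
    module

theorem exists_eq_algebraMap_add_smul (h : IsGDA comp)
    (hquad : ∀ z ∈ comp 1, ∃ r s : ℝ, z * z = r • z - algebraMap ℝ D s) {j : D}
    (hj : j ∈ comp 1) (hjj : j * j = -1) (hjc : ∀ w ∈ comp 1, Commute j w) :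
    ∀ z ∈ comp 1, ∃ a b : ℝ, z = algebraMap ℝ D a + b • j := by
  intro z hz
  obtain ⟨r, s, hq⟩ := hquad z hz
  set u := z - algebraMap ℝ D (r / 2) with hu_def
  have hu : u ∈ comp 1 := sub_mem hz (h.algebraMap_mem _)
  have hz_eq : z = algebraMap ℝ D (r / 2) + u := by rw [hu_def, add_sub_cancel]
  rcases le_or_gt 0 (r ^ 2 / 4 - s) with hc | hc
  · obtain ⟨a, ha⟩ := h.mem_range_of_mul_self_eq hu hc (sub_algebraMap_mul_self hq)
    exact ⟨r / 2 + a, 0, by rw [zero_smul, add_zero, map_add, ha, ← hz_eq]⟩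
  · set μ := √(s - r ^ 2 / 4)
    have hμj : (μ • j) * (μ • j) = algebraMap ℝ D (r ^ 2 / 4 - s) := by
      rw [smul_mul_smul_comm, hjj, Real.mul_self_sqrt (by linarith), smul_neg,
        Algebra.algebraMap_eq_smul_one, ← neg_smul, neg_sub]
    rcases h.eq_or_eq_neg_of_mul_self_eq hu ((comp 1).smul_mem μ hj)
      ((hjc u hu).smul_left μ).symm ((sub_algebraMap_mul_self hq).trans hμj.symm) with hu' | hu'
    · exact ⟨r / 2, μ, by rw [hz_eq, hu']⟩
    · exact ⟨r / 2, -μ, by rw [hz_eq, hu', neg_smul]⟩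

theorem mem_range_of_forall_commute (h : IsGDA comp)
    (hquad : ∀ z ∈ comp 1, ∃ r s : ℝ, z * z = r • z - algebraMap ℝ D s)
    (hnc : ¬∀ z ∈ comp 1, ∀ w ∈ comp 1, z * w = w * z) {d : D} (hd : d ∈ comp 1)
    (hdc : ∀ w ∈ comp 1, Commute d w) : d ∈ Set.range (algebraMap ℝ D) := by
  by_contra hnr
  obtain ⟨r, s, hq⟩ := hquad d hd
  obtain ⟨j, hj, hjj, a, b, hja⟩ := h.exists_mul_self_eq_neg_one hd hq hnr
  have hjc : ∀ w ∈ comp 1, Commute j w := fun w hw => by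
    rw [hja]
    exact ((hdc w hw).smul_left a).add_left (Algebra.commute_algebraMap_left b w)
  refine hnc fun z hz w hw => ?_
  obtain ⟨a', b', rfl⟩ := h.exists_eq_algebraMap_add_smul hquad hj hjj hjc z hz
  exact ((Algebra.commute_algebraMap_left a' w).add_left ((hjc w hw).smul_left b')).eq

theorem commute_or_anticommute (h : IsGDA comp)
    (hcomm : ∀ z ∈ comp 1, ∀ w ∈ comp 1, z * w = w * z) {j : D} (hj : j ∈ comp 1)
    (hjj : j * j = -1) {g : G} (u : Dˣ) (hu : (u : D) ∈ comp g) :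
    j * u = u * j ∨ j * u = -(u * j) := by
  set k : D := ↑u⁻¹ * j * u
  have hk : k ∈ comp 1 := by
    simpa using h.mul_mem (h.mul_mem (h.inv_mem u hu) hj) hu
  have hkk : k * k = j * j := by
    simp only [k, mul_assoc, Units.mul_inv_cancel_left]
    rw [← mul_assoc j j, hjj, neg_one_mul, mul_neg, Units.inv_mul]
  have hjk : j * u = u * k := by simp [k, mul_assoc]
  rcases h.eq_or_eq_neg_of_mul_self_eq hk hj (hcomm k hk j hj) hkk with hk' | hk'
  · exact Or.inl (by rw [hjk, hk'])
  · exact Or.inr (by rw [hjk, hk', mul_neg])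

theorem exists_not_commute (h : IsGDA comp) {T : Subgroup G}
    (hT : ∀ g, comp g ≠ ⊥ → g ∈ T) (X : T → Dˣ) (hX : ∀ t : T, (X t : D) ∈ comp t)
    (hcomm : ∀ z ∈ comp 1, ∀ w ∈ comp 1, z * w = w * z)
    (hnc : ¬∀ z ∈ comp 1, ∀ x : D, z * x = x * z) :
    ∃ t : T, ∃ w ∈ comp 1, (X t : D) * w ≠ w * X t := by
  by_contra! hX₁
  have htop := h.subalgebra_eq_top hT X hX (S := Subalgebra.centralizer ℝ (comp 1 : Set D))
    (fun z hz w hw => hcomm w hw z hz) (fun t w hw => (hX₁ t w hw).symm)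
  exact hnc fun z hz x =>
    (Subalgebra.mem_centralizer_iff ℝ).1 (htop ▸ Algebra.mem_top : x ∈ _) z hz

theorem conj_eq_self_of_centralizes (h : IsGDA comp)
    (hcomm : ∀ z ∈ comp 1, ∀ w ∈ comp 1, z * w = w * z) {φ : D →ₗ[ℝ] D}
    (hanti : ∀ x y, φ (x * y) = φ y * φ x) (hinvol : ∀ x, φ (φ x) = x)
    (hφ : ∀ z ∈ comp 1, φ z ∈ comp 1) {ψ : D →ₐ[ℝ] D}
    (hψ : ∀ g, ∀ x ∈ comp g, ψ x ∈ comp g) {g t : G} {x y : Dˣ} (hx : (x : D) ∈ comp g)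
    (hy : (y : D) ∈ comp t) (hxc : ∀ w ∈ comp 1, x * w = φ w * x)
    (hyc : ∀ w ∈ comp 1, y * w = w * y) {η η' : ℝ} (hη : η * η' ≠ 0) (hφx : φ x = η' • x)
    (hφy : φ y = η • y) {d : D} (hd : d ∈ comp 1) (hdy : ψ y = d * y) : φ d = d := by
  set c : D := y * x * ↑y⁻¹ * ↑x⁻¹
  have hc : c ∈ comp 1 := by
    have := h.mul_mem (h.mul_mem (h.mul_mem hy hx) (h.inv_mem y hy)) (h.inv_mem x hx)
    rwa [mul_comm t g, mul_inv_cancel_right, mul_inv_cancel] at this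
  have hrel : (y * x : D) = c * (x * y) := by simp [c, mul_assoc]
  clear_value c
  have hcc : c * c = 1 := mul_self_eq_one_of_mul_eq_mul_mul hanti (x * y).isUnit hη hφx hφy
    (by rw [hxc _ (hφ c hc), hinvol]) (hyc _ (hφ c hc)) hrel
  have hψc : ψ c = c := by
    rcases h.eq_or_eq_neg_of_mul_self_eq hc h.one_mem (Commute.one_right c)
      (by rw [hcc, one_mul]) with hc1 | hc1 <;> simp [hc1]
  set d' : D := ψ x * ↑x⁻¹
  have hd' : d' ∈ comp 1 := h.mul_inv_mem x (hψ g x hx) hx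
  have hd'x : ψ x = d' * x := by simp [d', mul_assoc]
  have hψrel := congrArg ψ hrel
  rw [map_mul, map_mul, map_mul, hψc, hdy, hd'x] at hψrel
  have hcd'd : c * d' * d = d * d' * c := by
    rw [hcomm c hc d' hd', mul_assoc, hcomm c hc d hd, ← mul_assoc, hcomm d' hd' d hd]
  have key : c * d' * d * (x * y) = c * d' * φ d * (x * y) :=
    calc c * d' * d * (x * y) = d * d' * (y * x) := by rw [hcd'd, hrel, mul_assoc]
      _ = d * (y * d') * x := by rw [hyc d' hd']; simp only [mul_assoc]
      _ = c * d' * (x * d) * y := by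
          rw [← mul_assoc d, mul_assoc (d * y), hψrel]; simp only [mul_assoc]
      _ = c * d' * φ d * (x * y) := by rw [hxc d hd]; simp only [mul_assoc]
  have hcd' : IsUnit (c * d') :=
    (Units.mk c c hcc hcc).isUnit.mul ((x.isUnit.map ψ).mul x⁻¹.isUnit)
  exact (hcd'.mul_left_cancel ((x * y).isUnit.mul_right_cancel key)).symm

theorem centralizes_or_conj (h : IsGDA comp)
    (hcomm : ∀ z ∈ comp 1, ∀ w ∈ comp 1, z * w = w * z) {φ : D →ₗ[ℝ] D} (hφ1 : φ 1 = 1)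
    {j : D} (hj : j ∈ comp 1) (hjj : j * j = -1) (hφj : φ j = -j)
    (hspan : ∀ z ∈ comp 1, ∃ a b : ℝ, z = algebraMap ℝ D a + b • j) {g : G} (u : Dˣ)
    (hu : (u : D) ∈ comp g) :
    (∀ w ∈ comp 1, u * w = w * u) ∨ ∀ w ∈ comp 1, u * w = φ w * u := by
  rcases h.commute_or_anticommute hcomm hj hjj u hu with hju | hju
  · refine Or.inl fun w hw => ?_
    obtain ⟨a, b, rfl⟩ := hspan w hw
    rw [mul_add, add_mul, mul_smul_comm, smul_mul_assoc, ← hju, Algebra.commutes]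
  · refine Or.inr fun w hw => ?_
    obtain ⟨a, b, rfl⟩ := hspan w hw
    rw [map_add, map_smul, LinearMap.map_algebraMap_of_map_one hφ1, hφj, mul_add, add_mul,
      mul_smul_comm, smul_mul_assoc, ← Algebra.commutes, neg_mul, hju, neg_neg]

theorem mul_eq_mul_conj_of_notMem_range (h : IsGDA comp) {T : Subgroup G}
    (hT : ∀ g, comp g ≠ ⊥ → g ∈ T) (X : T → Dˣ) (hX : ∀ t : T, (X t : D) ∈ comp t)
    (hcomm : ∀ z ∈ comp 1, ∀ w ∈ comp 1, z * w = w * z)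
    (hnc : ¬(Module.finrank ℝ (comp 1) = 2 ∧ ∀ z ∈ comp 1, ∀ x : D, z * x = x * z))
    {φ : D →ₗ[ℝ] D} (hanti : ∀ x y, φ (x * y) = φ y * φ x) (hinvol : ∀ x, φ (φ x) = x)
    (hφ1 : φ 1 = 1) (hφ : ∀ z ∈ comp 1, φ z ∈ comp 1)
    (hφE : ∀ z ∈ comp 1, ∃ r s : ℝ,
      φ z = algebraMap ℝ D r - z ∧ z * z = r • z - algebraMap ℝ D s)
    (η : T → ℝ) (hη : ∀ t, η t ≠ 0) (hφX : ∀ t, φ (X t) = η t • (X t : D))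
    {ψ : D →ₐ[ℝ] D} (hψ : ∀ g, ∀ x ∈ comp g, ψ x ∈ comp g) {z : D} (hz : z ∈ comp 1)
    (hzr : z ∉ Set.range (algebraMap ℝ D)) (t : T) {d : D} (hd : d ∈ comp 1)
    (hdX : ψ (X t) = d * X t) : d * X t = X t * φ d := by
  have hquad z hz := (hφE z hz).imp fun _ => Exists.imp fun _ => And.right
  obtain ⟨r, s, -, hq⟩ := hφE z hz
  obtain ⟨j, hj, hjj, -⟩ := h.exists_mul_self_eq_neg_one hz hq hzr
  have : Nontrivial D := nontrivial_of_ne z 0 fun h0 => hzr ⟨0, by rw [h0, map_zero]⟩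
  have hjr := notMem_range_of_mul_self_eq_neg_one hjj
  have hspan := h.exists_eq_algebraMap_add_smul hquad hj hjj fun w hw => hcomm j hj w hw
  have hφj : φ j = -j := by
    obtain ⟨r', s', hφj, hq'⟩ := hφE j hj
    obtain rfl : r' = 0 := by
      by_contra hr'
      rw [hjj, eq_sub_iff_add_eq, neg_add_eq_sub] at hq'
      refine hjr ⟨r'⁻¹ * (s' - 1), ?_⟩
      rw [map_mul, map_sub, map_one, hq', ← Algebra.smul_def, inv_smul_smul₀ hr']
    rw [hφj, map_zero, zero_sub]
  have hXX := fun u => h.centralizes_or_conj hcomm hφ1 hj hjj hφj hspan (X u) (hX u)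
  obtain ⟨t₀, w₀, hw₀, hne⟩ := h.exists_not_commute hT X hX hcomm
    fun hcen => hnc ⟨finrank_eq_two_of_forall_eq h.one_mem hj hspan hjr, hcen⟩
  rcases hXX t with hy | hy
  · rw [h.conj_eq_self_of_centralizes hcomm hanti hinvol hφ hψ (hX t₀) (hX t)
      ((hXX t₀).resolve_left fun hx => hne (hx w₀ hw₀)) hy (mul_ne_zero (hη t) (hη t₀))
      (hφX t₀) (hφX t) hd hdX, hy d hd]
  · rw [hy _ (hφ d hd), hinvol]

end IsGDA

/-- Unless `ℂ ≅ D_e ⊆ Z(D)`, every automorphism of the real graded division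
algebra `D` (as a graded algebra) commutes with the degree-preserving involution
`φ₀` restricting to the conjugation on `D_e`. -/
theorem stmt_9 (comp : G → Submodule ℝ D) (hgda : IsGDA comp)
    (hfd : FiniteDimensional ℝ ↥(comp (1 : G)))
    (T : Subgroup G) (hT : ∀ g : G, comp g ≠ ⊥ ↔ g ∈ T)
    (X : ↥T → Dˣ) (hX : ∀ t : ↥T, (X t : D) ∈ comp (t : G))
    -- when `D_e` is noncommutative (≅ ℍ), the `X_t` are chosen in the centralizer of `D_e`
    (hXcent : ¬(∀ z ∈ comp (1 : G), ∀ w ∈ comp (1 : G), z * w = w * z) →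
      ∀ (t : ↥T), ∀ z ∈ comp (1 : G), (X t : D) * z = z * (X t : D))
    (φ : D ≃ₗ[ℝ] D)
    (hanti : ∀ x y : D, φ (x * y) = φ y * φ x)
    (hinvol : ∀ x : D, φ (φ x) = x)
    (hgr : ∀ (g : G), ∀ x ∈ comp g, φ x ∈ comp g)
    (hconj : ∀ z ∈ comp (1 : G),
      (∃ r : ℝ, z + φ z = algebraMap ℝ D r) ∧ ∃ r : ℝ, 0 ≤ r ∧ z * φ z = algebraMap ℝ D r)
    (η : ↥T → ℝ) (hη : ∀ t : ↥T, η t = 1 ∨ η t = -1)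
    (hφX : ∀ t : ↥T, φ (X t : D) = η t • (X t : D))
    -- it is not the case that `ℂ ≅ D_e ⊆ Z(D)`
    (hexc : ¬((Module.finrank ℝ ↥(comp (1 : G)) = 2) ∧
      ∀ z ∈ comp (1 : G), ∀ x : D, z * x = x * z)) :
    ∀ ψ : D ≃ₐ[ℝ] D, (∀ (g : G), ∀ x ∈ comp g, ψ x ∈ comp g) →
      ∀ x : D, ψ (φ x) = φ (ψ x) := by
  intro ψ hψ
  have hφ1 : φ 1 = 1 := map_one_of_anti_involutive hanti hinvol
  have hφE : ∀ z ∈ comp 1, ∃ r s : ℝ,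
      φ z = algebraMap ℝ D r - z ∧ z * z = r • z - algebraMap ℝ D s := fun z hz => by
    obtain ⟨⟨r, hr⟩, s, -, hs⟩ := hconj z hz
    exact ⟨r, s, eq_algebraMap_sub_and_mul_self_eq hr hs⟩
  have hquad z hz := (hφE z hz).imp fun _ => Exists.imp fun _ => And.right
  let S := commutingSubalgebra φ.toLinearMap hanti hφ1 ψ.toAlgHom
  suffices hXS : ∀ t, (X t : D) ∈ S by
    have hS : S = ⊤ := hgda.subalgebra_eq_top (fun g => (hT g).1) X hX
      (fun z hz => comm_of_eq_algebraMap_sub hφ1 ψ.injective (hψ 1) hφE hz) hXS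
    exact fun x => mem_commutingSubalgebra.1 (hS ▸ Algebra.mem_top : x ∈ S)
  intro t
  set d := ψ (X t) * ↑(X t)⁻¹
  have hd : d ∈ comp 1 := hgda.mul_inv_mem _ (hψ _ _ (hX t)) (hX t)
  have hdX : ψ (X t) = d * X t := by simp [d, mul_assoc]
  refine mem_commutingSubalgebra.2 (comm_of_mul_eq_mul_map hanti (hφX t) hdX ?_)
  by_cases hcomm : ∀ z ∈ comp 1, ∀ w ∈ comp 1, z * w = w * z
  · by_cases hC : ∃ z ∈ comp 1, z ∉ Set.range (algebraMap ℝ D)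
    · obtain ⟨z, hz, hzr⟩ := hC
      exact hgda.mul_eq_mul_conj_of_notMem_range (fun g => (hT g).1) X hX hcomm hexc hanti
        hinvol hφ1 (hgr 1) hφE η (fun t => by rcases hη t with h | h <;> norm_num [h]) hφX
        (ψ := ψ.toAlgHom) hψ hz hzr t hd hdX
    · exact mul_eq_mul_map_of_mem_range hφ1 (not_not.1 fun hdr => hC ⟨d, hd, hdr⟩) _
  · exact mul_eq_mul_map_of_mem_range hφ1 (hgda.mem_range_of_forall_commute hquad hcomm hd
      (commute_of_map_eq_mul ψ (hψ 1) (X t) (hXcent hcomm t) hdX)) _
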